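/- Let f_i : ℝ^{n_i} → ℝ be differentiable and α-strongly convex (α > 0) for i = 1,…,N, let A_i ∈ ℝ^{m×n_i}, c ∈ ℝ^m, ρ > 0, γ > 0, and let P_i be symmetric positive semi-definite. Suppose (x*, λ*) satisfies the KKT conditions ∇f_i(x_i*) = A_iᵀλ* and ∑_i A_i x_i* = c, and that x_i⁺ satisfies ∇f_i(x_i⁺) = A_iᵀλ − ρA_iᵀ(A_i x_i⁺ + ∑_{j≠i}A_j x_j − c) + P_i(x_i − x_i⁺) for each i, with λ⁺ = λ − γρ(∑_i A_i x_i⁺ − c). Then (1/(2γρ))‖λ − λ*‖² + (1/2)∑_{i=1}^N ‖x_i − x_i*‖²_{ρA_iᵀA_i+P_i} ≥ α ∑_{i=1}^N ‖x_i⁺ − x_i*‖² + (1/(2γρ))‖λ⁺ − λ*‖² + (1/2)∑_{i=1}^N ‖x_i⁺ − x_i*‖²_{ρA_iᵀA_i+P_i} + H, where H := (1/2)∑_{i=1}^N ‖x_i⁺ − x_i‖²_{ρA_iᵀA_i+P_i} + ((2−γ)/(2γ²ρ))‖λ⁺ − λ‖² + (1/γ)⟨λ − λ⁺, ∑_{i=1}^N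 A_i(x_i − x_i⁺)⟩. -/
import Mathlib


open Matrix Finset RealInnerProductSpace

/-- Matrix-vector multiplication `A x` as a map between Euclidean spaces. -/
noncomputable def mv {a b : ℕ} (A : Matrix (Fin a) (Fin b) ℝ)
    (x : EuclideanSpace ℝ (Fin b)) : EuclideanSpace ℝ (Fin a) :=
  Matrix.toEuclideanLin A x

/-- Quadratic form `xᵀ M x`. -/
noncomputable def qf {a : ℕ} (M : Matrix (Fin a) (Fin a) ℝ)
    (x : EuclideanSpace ℝ (Fin a)) : ℝ := ⟪x, mv M x⟫

/-- Operator norm of a matrix, viewed as a linear map between Euclidean spaces. -/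
noncomputable def opN {a b : ℕ} (A : Matrix (Fin a) (Fin b) ℝ) : ℝ :=
  ‖(LinearMap.toContinuousLinearMap (Matrix.toEuclideanLin A))‖

lemma mv_smul {a b : ℕ} (A : Matrix (Fin a) (Fin b) ℝ) (t : ℝ) (u : EuclideanSpace ℝ (Fin b)) :
    mv A (t • u) = t • mv A u := map_smul (Matrix.toEuclideanLin A) t u

lemma mv_sub {a b : ℕ} (A : Matrix (Fin a) (Fin b) ℝ) (u v : EuclideanSpace ℝ (Fin b)) :
    mv A (u - v) = mv A u - mv A v := map_sub _ u v

lemma mv_addM {a b : ℕ} (A B : Matrix (Fin a) (Fin b) ℝ) (u : EuclideanSpace ℝ (Fin b)) :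
    mv (A + B) u = mv A u + mv B u := by
  simp [mv, map_add]

lemma mv_smulM {a b : ℕ} (A : Matrix (Fin a) (Fin b) ℝ) (r : ℝ) (u : EuclideanSpace ℝ (Fin b)) :
    mv (r • A) u = r • mv A u := by
  simp [mv, _root_.map_smul]

lemma mv_mul {a b c : ℕ} (A : Matrix (Fin a) (Fin b) ℝ) (B : Matrix (Fin b) (Fin c) ℝ)
    (u : EuclideanSpace ℝ (Fin c)) : mv (A * B) u = mv A (mv B u) := by
  simp [mv, Matrix.toEuclideanLin_apply, Matrix.mulVec_mulVec]

lemma mv_transpose {a b : ℕ} (A : Matrix (Fin a) (Fin b) ℝ) (u : EuclideanSpace ℝ (Fin a))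
    (v : EuclideanSpace ℝ (Fin b)) : ⟪mv Aᵀ u, v⟫ = ⟪u, mv A v⟫ := by
  have h : Aᵀ = Aᴴ := by ext i j; simp [Matrix.conjTranspose]
  rw [mv, h, Matrix.toEuclideanLin_conjTranspose_eq_adjoint]
  exact LinearMap.adjoint_inner_left _ _ _

lemma inner_mv_transpose {a b : ℕ} (A : Matrix (Fin a) (Fin b) ℝ)
    (u : EuclideanSpace ℝ (Fin b)) (v : EuclideanSpace ℝ (Fin a)) :
    ⟪u, mv Aᵀ v⟫ = ⟪mv A u, v⟫ := by
  rw [real_inner_comm, mv_transpose, real_inner_comm]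

lemma qf_neg {a : ℕ} (M : Matrix (Fin a) (Fin a) ℝ) (u : EuclideanSpace ℝ (Fin a)) :
    qf M (-u) = qf M u := by
  simp [qf, mv]

lemma qf_expand {a : ℕ} (M : Matrix (Fin a) (Fin a) ℝ) (hsym : Mᵀ = M)
    (u d : EuclideanSpace ℝ (Fin a)) :
    qf M (u + d) = qf M u + 2 * ⟪u, mv M d⟫ + qf M d := by
  have h : ⟪d, mv M u⟫ = ⟪u, mv M d⟫ := by
    conv_lhs => rw [real_inner_comm, ← hsym, mv_transpose]
  have hM : mv M (u + d) = mv M u + mv M d := map_add (Matrix.toEuclideanLin M) u d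
  simp only [qf, hM, inner_add_left, inner_add_right]
  linarith [h]

/-- the descent inequality of Lemma 3.2 (eq-1-20). -/
theorem stmt5 {N m : ℕ} (n : Fin N → ℕ)
    (f : (i : Fin N) → EuclideanSpace ℝ (Fin (n i)) → ℝ)
    (g : (i : Fin N) → EuclideanSpace ℝ (Fin (n i)) → EuclideanSpace ℝ (Fin (n i)))
    (hdiff : ∀ i x, HasGradientAt (f i) (g i x) x)
    (α : ℝ) (hα : 0 < α)
    (hsc : ∀ i x y, f i y ≥ f i x + ⟪y - x, g i x⟫ + α * ‖x - y‖ ^ 2)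
    (A : (i : Fin N) → Matrix (Fin m) (Fin (n i)) ℝ)
    (c : EuclideanSpace ℝ (Fin m))
    (ρ γ : ℝ) (hρ : 0 < ρ) (hγ : 0 < γ)
    (P : (i : Fin N) → Matrix (Fin (n i)) (Fin (n i)) ℝ)
    (hP : ∀ i, (P i).PosSemidef)
    (xstar : (i : Fin N) → EuclideanSpace ℝ (Fin (n i)))
    (lamstar : EuclideanSpace ℝ (Fin m))
    (hkkt1 : ∀ i, g i (xstar i) = mv (A i)ᵀ lamstar)
    (hkkt2 : ∑ i, mv (A i) (xstar i) = c)
    (x xp : (i : Fin N) → EuclideanSpace ℝ (Fin (n i)))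
    (lam lamp : EuclideanSpace ℝ (Fin m))
    (hopt : ∀ i, g i (xp i) = mv (A i)ᵀ lam
        - ρ • mv (A i)ᵀ (mv (A i) (xp i) + (∑ j ∈ Finset.univ.erase i, mv (A j) (x j)) - c)
        + mv (P i) (x i - xp i))
    (hdual : lamp = lam - (γ * ρ) • ((∑ i, mv (A i) (xp i)) - c)) :
    (1 / (2 * γ * ρ)) * ‖lam - lamstar‖ ^ 2
        + (1 / 2) * ∑ i, qf (ρ • ((A i)ᵀ * A i) + P i) (x i - xstar i)
      ≥ α * ∑ i, ‖xp i - xstar i‖ ^ 2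
        + (1 / (2 * γ * ρ)) * ‖lamp - lamstar‖ ^ 2
        + (1 / 2) * ∑ i, qf (ρ • ((A i)ᵀ * A i) + P i) (xp i - xstar i)
        + ((1 / 2) * ∑ i, qf (ρ • ((A i)ᵀ * A i) + P i) (xp i - x i)
            + ((2 - γ) / (2 * γ ^ 2 * ρ)) * ‖lamp - lam‖ ^ 2
            + (1 / γ) * ⟪lam - lamp, ∑ i, mv (A i) (x i - xp i)⟫) := by

  set r : EuclideanSpace ℝ (Fin m) := (∑ i, mv (A i) (xp i)) - c with hrdef
  set s : EuclideanSpace ℝ (Fin m) := ∑ i, mv (A i) (x i - xp i) with hsdef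
  set v : EuclideanSpace ℝ (Fin m) := (lam - lamstar) - ρ • (r + s) with hvdef
  have hγρ : γ * ρ ≠ 0 := by positivity
  have hγ0 : γ ≠ 0 := ne_of_gt hγ
  have hρ0 : ρ ≠ 0 := ne_of_gt hρ
  -- symmetry of M i
  have hsymM : ∀ i, (ρ • ((A i)ᵀ * A i) + P i)ᵀ = ρ • ((A i)ᵀ * A i) + P i := by
    intro i
    have hPt : (P i)ᵀ = P i := by
      have h1 : (P i)ᴴ = P i := (hP i).1
      have h2 : (P i)ᵀ = (P i)ᴴ := by ext a b; simp [Matrix.conjTranspose]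
      rw [h2, h1]
    rw [Matrix.transpose_add, Matrix.transpose_smul, Matrix.transpose_mul,
      Matrix.transpose_transpose, hPt]
  -- r + s = ∑ A x − c
  have hrs2 : r + s = (∑ j, mv (A j) (x j)) - c := by
    rw [hrdef, hsdef]
    have : ∑ j, mv (A j) (x j - xp j) = (∑ j, mv (A j) (x j)) - ∑ j, mv (A j) (xp j) := by
      rw [← Finset.sum_sub_distrib]
      exact Finset.sum_congr rfl fun j _ => mv_sub _ _ _
    rw [this]; abel
  -- ∑ A (xp − x*) = r
  have hrsum : ∑ i, mv (A i) (xp i - xstar i) = r := by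
    have : ∑ i, mv (A i) (xp i - xstar i)
        = (∑ i, mv (A i) (xp i)) - ∑ i, mv (A i) (xstar i) := by
      rw [← Finset.sum_sub_distrib]
      exact Finset.sum_congr rfl fun j _ => mv_sub _ _ _
    rw [this, hkkt2]
  -- per-i key inequality
  have key : ∀ i, 2 * α * ‖xp i - xstar i‖ ^ 2 ≤
      ⟪mv (A i) (xp i - xstar i), v⟫
      + ((1/2) * qf (ρ • ((A i)ᵀ * A i) + P i) (x i - xstar i)
        - (1/2) * qf (ρ • ((A i)ᵀ * A i) + P i) (xp i - xstar i)
        - (1/2) * qf (ρ • ((A i)ᵀ * A i) + P i) (xp i - x i)) := by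
    intro i
    have h1 := hsc i (xp i) (xstar i)
    have h2 := hsc i (xstar i) (xp i)
    have e1 : ⟪xstar i - xp i, g i (xp i)⟫ = -⟪xp i - xstar i, g i (xp i)⟫ := by
      rw [← inner_neg_left]; congr 1; abel
    have e2 : ‖xstar i - xp i‖ ^ 2 = ‖xp i - xstar i‖ ^ 2 := by rw [norm_sub_rev]
    have hmono : 2 * α * ‖xp i - xstar i‖ ^ 2 ≤ ⟪xp i - xstar i, g i (xp i) - g i (xstar i)⟫ := by
      rw [inner_sub_right]
      rw [e1] at h1
      rw [e2] at h2
      linarith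
    -- rewrite the gradient difference
    have hw : mv (A i) (xp i) + (∑ j ∈ Finset.univ.erase i, mv (A j) (x j)) - c
        = (r + s) - mv (A i) (x i - xp i) := by
      have he : ∑ j ∈ Finset.univ.erase i, mv (A j) (x j)
          = (∑ j, mv (A j) (x j)) - mv (A i) (x i) := by
        rw [← Finset.add_sum_erase Finset.univ _ (Finset.mem_univ i)]; abel
      rw [he, hrs2, mv_sub]; abel
    have hg : g i (xp i) - g i (xstar i)
        = mv (A i)ᵀ v + mv (ρ • ((A i)ᵀ * A i) + P i) (x i - xp i) := by
      rw [hopt i, hkkt1 i, hw, hvdef]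
      simp only [mv_sub, mv_addM, mv_smulM, mv_mul, mv_smul, smul_sub]
      module
    have hq : ⟪xp i - xstar i, mv (ρ • ((A i)ᵀ * A i) + P i) (x i - xp i)⟫
        = (1/2) * qf (ρ • ((A i)ᵀ * A i) + P i) (x i - xstar i)
          - (1/2) * qf (ρ • ((A i)ᵀ * A i) + P i) (xp i - xstar i)
          - (1/2) * qf (ρ • ((A i)ᵀ * A i) + P i) (xp i - x i) := by
      have e : x i - xstar i = (xp i - xstar i) + (x i - xp i) := by abel
      have e2' : xp i - x i = -(x i - xp i) := by abel
      rw [e, qf_expand _ (hsymM i), e2', qf_neg]; ring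
    rw [hg, inner_add_right, inner_mv_transpose] at hmono
    linarith [hq, hmono]
  -- sum the key inequality
  have hS : 2 * α * ∑ i, ‖xp i - xstar i‖ ^ 2 ≤
      ⟪r, v⟫ + ((1/2) * ∑ i, qf (ρ • ((A i)ᵀ * A i) + P i) (x i - xstar i)
        - (1/2) * ∑ i, qf (ρ • ((A i)ᵀ * A i) + P i) (xp i - xstar i)
        - (1/2) * ∑ i, qf (ρ • ((A i)ᵀ * A i) + P i) (xp i - x i)) := by
    have := Finset.sum_le_sum (fun i (_ : i ∈ Finset.univ) => key i)
    rw [Finset.sum_add_distrib, Finset.sum_sub_distrib, Finset.sum_sub_distrib,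
      ← sum_inner, hrsum, ← Finset.mul_sum, ← Finset.mul_sum, ← Finset.mul_sum,
      ← Finset.mul_sum] at this
    linarith [this]
  -- scalar identities for the lambda terms
  have hlamp : lamp - lamstar = (lam - lamstar) - (γ * ρ) • r := by rw [hdual]; abel
  have hnr : ‖(γ * ρ) • r‖ ^ 2 = (γ * ρ)^2 * ‖r‖^2 := by
    rw [norm_smul]; rw [Real.norm_eq_abs, abs_of_pos (by positivity)]; ring
  have eL1 : ‖lamp - lamstar‖ ^ 2
      = ‖lam - lamstar‖ ^ 2 - 2 * (γ * ρ) * ⟪r, lam - lamstar⟫ + (γ * ρ)^2 * ‖r‖^2 := by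
    rw [hlamp, norm_sub_sq_real, real_inner_smul_right, hnr,
      real_inner_comm]
    ring
  have eL2 : ‖lamp - lam‖ ^ 2 = (γ * ρ)^2 * ‖r‖^2 := by
    rw [hdual]
    have : lam - (γ * ρ) • r - lam = -((γ * ρ) • r) := by abel
    rw [this, norm_neg, hnr]
  have eL3 : ⟪lam - lamp, s⟫ = (γ * ρ) * ⟪r, s⟫ := by
    rw [hdual]
    have : lam - (lam - (γ * ρ) • r) = (γ * ρ) • r := by abel
    rw [this, real_inner_smul_left]
  have ev : ⟪r, v⟫ = ⟪r, lam - lamstar⟫ - ρ * ‖r‖^2 - ρ * ⟪r, s⟫ := by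
    rw [hvdef, inner_sub_right, real_inner_smul_right, inner_add_right,
      real_inner_self_eq_norm_sq]
    ring
  have c1 : (1 / (2 * γ * ρ)) * ‖lamp - lamstar‖ ^ 2
      = (1 / (2 * γ * ρ)) * ‖lam - lamstar‖ ^ 2 - ⟪r, lam - lamstar⟫
        + (γ * ρ / 2) * ‖r‖^2 := by
    rw [eL1]; field_simp
  have c2 : ((2 - γ) / (2 * γ ^ 2 * ρ)) * ‖lamp - lam‖ ^ 2 = ((2 - γ) * ρ / 2) * ‖r‖^2 := by
    rw [eL2]; field_simp
  have c3 : (1 / γ) * ⟪lam - lamp, s⟫ = ρ * ⟪r, s⟫ := by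
    rw [eL3]; field_simp
  have hSnn : (0:ℝ) ≤ ∑ i, ‖xp i - xstar i‖ ^ 2 :=
    Finset.sum_nonneg fun i _ => by positivity
  have hαS : 0 ≤ α * ∑ i, ‖xp i - xstar i‖ ^ 2 := mul_nonneg hα.le hSnn
  rw [ge_iff_le, c1, c2, c3]
  rw [ev] at hS
  linarith [hS, hαS]
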